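/- For every integer k ≥ 5, the minimum distance of L_k^+ = { (m, m·G_k, m) : m ∈ F_2^k } ⊆ F_2^{3k} equals 6; hence L_k^+ can correct any pattern of at most 2 errors. -/

import Mathlib

/-!
Over `𝔽₂`, `G k = J - I`, so `m ᵥ* G k = (∑ i, m i) • 𝟙 + m`, and `∑ i, m i` is the parity of the
weight `w` of `m`. For even `w ≥ 2` the codeword is `(m, m, m)`, of weight `3w ≥ 6`; for odd `w`
the middle block is the complement of `m`, so the weight is `2w + (k - w) = k + w ≥ 6`.
Any vector of weight `2` attains `6`, and minimum distance `6 > 2 · 2` gives unique decoding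
of two errors by the triangle inequality.
-/

/-- the k×k matrix over F₂ with 0 on the diagonal and 1 elsewhere -/
def G (k : ℕ) : Matrix (Fin k) (Fin k) (ZMod 2) := fun i j => if i = j then 0 else 1

open Finset Matrix

lemma eq_of_hammingDist_add_le {ι κ R : Type*} [Fintype ι] [Fintype κ] [AddCommGroup R]
    [DecidableEq R] (f : (ι → R) →+ (κ → R)) (t : ℕ)
    (hf : ∀ m, m ≠ 0 → 2 * t < hammingNorm m + hammingNorm (f m) + hammingNorm m)
    {m m' y₁ y₃ : ι → R} {y₂ : κ → R}
    (h : hammingDist y₁ m + hammingDist y₂ (f m) + hammingDist y₃ m ≤ t)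
    (h' : hammingDist y₁ m' + hammingDist y₂ (f m') + hammingDist y₃ m' ≤ t) :
    m = m' := by
  by_contra hne
  have hweight := hf (m - m') (sub_ne_zero.mpr hne)
  rw [map_sub] at hweight
  simp only [sub_eq_neg_add, ← hammingDist_eq_hammingNorm] at hweight
  have t₁ := hammingDist_triangle_left m' m y₁
  have t₂ := hammingDist_triangle_left (f m') (f m) y₂
  have t₃ := hammingDist_triangle_left m' m y₃
  omega

lemma sum_eq_hammingNorm {ι : Type*} [Fintype ι] (m : ι → ZMod 2) :
    ∑ i, m i = (hammingNorm m : ZMod 2) := by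
  have h_one : ∀ x : ZMod 2, x ≠ 0 → x = 1 := by decide
  rw [hammingNorm, ← sum_filter_ne_zero,
    sum_congr rfl (fun i hi => h_one _ (mem_filter.mp hi).2), sum_const, nsmul_one]

lemma hammingNorm_indicator_one {ι : Type*} [Fintype ι] [DecidableEq ι] (s : Finset ι) :
    hammingNorm (fun i => if i ∈ s then (1 : ZMod 2) else 0) = #s := by
  simp [hammingNorm]

lemma hammingNorm_one_add {ι : Type*} [Fintype ι] (m : ι → ZMod 2) :
    hammingNorm (1 + m) = Fintype.card ι - hammingNorm m := by
  have h_iff : ∀ x : ZMod 2, 1 + x ≠ 0 ↔ x = 0 := by decide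
  simp only [hammingNorm, Pi.add_apply, Pi.one_apply, h_iff]
  rw [← card_univ, ← card_filter_add_card_filter_not (s := univ) (fun i => m i = 0)]
  simp

lemma vecMul_G_apply {k : ℕ} (m : Fin k → ZMod 2) (j : Fin k) :
    (m ᵥ* G k) j = ∑ i, m i + m j := by
  have h : ∀ i, m i * G k i j = m i + if i = j then m i else 0 := by
    intro i
    by_cases hij : i = j <;> simp [G, hij, CharTwo.add_self_eq_zero]
  simp only [vecMul, dotProduct, h, sum_add_distrib, sum_ite_eq']
  simp

lemma vecMul_G_of_even {k : ℕ} {m : Fin k → ZMod 2} (h : Even (hammingNorm m)) :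
    m ᵥ* G k = m := by
  funext j
  rw [vecMul_G_apply, sum_eq_hammingNorm, h.natCast_zmod_two, zero_add]

lemma vecMul_G_of_odd {k : ℕ} {m : Fin k → ZMod 2} (h : Odd (hammingNorm m)) :
    m ᵥ* G k = 1 + m := by
  funext j
  rw [vecMul_G_apply, sum_eq_hammingNorm, h.natCast_zmod_two]
  rfl

lemma six_le_codeword_weight {k : ℕ} (hk : 5 ≤ k) {m : Fin k → ZMod 2} (hm : m ≠ 0) :
    6 ≤ hammingNorm m + hammingNorm (m ᵥ* G k) + hammingNorm m := by
  have hpos : hammingNorm m ≠ 0 := hammingNorm_ne_zero_iff.mpr hm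
  have hle : hammingNorm m ≤ k := by
    simpa using hammingNorm_le_card_fintype (x := m)
  rcases Nat.even_or_odd (hammingNorm m) with he | ho
  · rw [vecMul_G_of_even he]
    obtain ⟨r, hr⟩ := he
    omega
  · rw [vecMul_G_of_odd ho, hammingNorm_one_add, Fintype.card_fin]
    omega

theorem stmt11 (k : ℕ) (hk : 5 ≤ k) :
    IsLeast {w : ℕ | ∃ m : Fin k → ZMod 2, m ≠ 0 ∧
      w = hammingNorm m + hammingNorm (Matrix.vecMul m (G k)) + hammingNorm m} 6 ∧
    ∀ (m m' y₁ y₂ y₃ : Fin k → ZMod 2),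
      hammingDist y₁ m + hammingDist y₂ (Matrix.vecMul m (G k)) + hammingDist y₃ m ≤ 2 →
      hammingDist y₁ m' + hammingDist y₂ (Matrix.vecMul m' (G k)) + hammingDist y₃ m' ≤ 2 →
      m = m' := by
  refine ⟨⟨?_, ?_⟩, ?_⟩
  · obtain ⟨s, -, hs⟩ := exists_subset_card_eq (s := (univ : Finset (Fin k))) (n := 2)
      (by rw [card_univ, Fintype.card_fin]; omega)
    set m : Fin k → ZMod 2 := fun i => if i ∈ s then 1 else 0
    have hnorm : hammingNorm m = 2 := (hammingNorm_indicator_one s).trans hs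
    refine ⟨m, hammingNorm_ne_zero_iff.mp (by omega), ?_⟩
    rw [vecMul_G_of_even (hnorm.symm ▸ even_two), hnorm]
  · rintro w ⟨m, hm, rfl⟩
    exact six_le_codeword_weight hk hm
  · intro m m' _ _ _ h h'
    exact eq_of_hammingDist_add_le (vecMulLinear (G k)).toAddMonoidHom 2
      (fun m hm => by simpa using (six_le_codeword_weight hk hm).trans_lt' (by norm_num)) h h'
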